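/- Let (q_n) ⊂ (0,1) with q_n → 1 and q_n^n → a for some a ∈ [0,1). Then for every x ≥ 0, D*_{n,q_n}(e_2; x) → x^2 as n → ∞. -/

import Mathlib

open Real Filter Topology

noncomputable def theta (k : ℕ) : ℝ := if Even k then 0 else 1

noncomputable def gam (μ q : ℝ) : ℕ → ℝ
  | 0 => 1
  | n + 1 => ((1 - q ^ (2 * μ * theta (n + 1) + (n + 1 : ℝ))) / (1 - q)) * gam μ q n

/-- q-number of a real `a`: `[a]_q = (1-q^a)/(1-q)` (real exponentiation). -/
noncomputable def qnum (q a : ℝ) : ℝ := (1 - q ^ a) / (1 - q)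

/-- q-Dunkl exponential `E_{μ,q}`. -/
noncomputable def Eexp (μ q x : ℝ) : ℝ := ∑' k : ℕ, q ^ (k * (k - 1) / 2) * x ^ k / gam μ q k

/-- nodes of the Dunkl q-Szász-Mirakjan operator. -/
noncomputable def node (μ q : ℝ) (n k : ℕ) : ℝ :=
  (1 - q ^ (2 * μ * theta k + (k : ℝ))) / (q ^ ((k : ℝ) - 2) * (1 - q ^ n))

/-- Dunkl q-Szász-Mirakjan operator `D*_{n,q}`. -/
noncomputable def Dop (μ q : ℝ) (n : ℕ) (f : ℝ → ℝ) (x : ℝ) : ℝ :=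
  (1 / Eexp μ q (qnum q n * x)) *
    ∑' k : ℕ, (qnum q n * x) ^ k / gam μ q k * q ^ (k * (k - 1) / 2) * f (node μ q n k)

/-!
Write `w_k` for the weights and `ν_k` for the nodes of `D*_{n,q}` at `x`. Then
`w_{k+1} ν_{k+1} = x q w_k`, `ν_0 = 0` and `ν_{k+1} = ν_k / q + g_k` with
`g_k = (q^{2μθ_k+1} - q^{2μθ_{k+1}+2}) / (1 - q^n)`, so shifting the index twice gives exactly
`Σ w ν² = x² q Σ w + x q Σ w g`, i.e. `D*_{n,q}(e_2; x) - q x² = x q (Σ w g) / (Σ w)`.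
All exponents lie in `[0, 2μ + 2]`, so `|g_k| ≤ (1 - q^{2μ+2}) / (1 - q^n)`, and along `q_n`
this bound tends to `0 / (1 - a) = 0`.
-/

lemma theta_nonneg (k : ℕ) : 0 ≤ theta k := by unfold theta; split <;> norm_num

lemma theta_le_one (k : ℕ) : theta k ≤ 1 := by unfold theta; split <;> norm_num

lemma one_le_qnum {q a : ℝ} (hq0 : 0 < q) (hq1 : q < 1) (ha : 1 ≤ a) : 1 ≤ qnum q a := by
  have hqa : q ^ a ≤ q := by
    simpa using rpow_le_rpow_of_exponent_ge hq0 hq1.le ha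
  rw [qnum, le_div_iff₀ (by linarith)]
  linarith

lemma abs_rpow_sub_rpow_le {q s r c : ℝ} (hq0 : 0 < q) (hq1 : q ≤ 1)
    (hs0 : 0 ≤ s) (hsc : s ≤ c) (hr0 : 0 ≤ r) (hrc : r ≤ c) :
    |q ^ s - q ^ r| ≤ 1 - q ^ c := by
  have hs := rpow_le_rpow_of_exponent_ge hq0 hq1 hsc
  have hr := rpow_le_rpow_of_exponent_ge hq0 hq1 hrc
  have hs1 := rpow_le_one hq0.le hq1 hs0
  have hr1 := rpow_le_one hq0.le hq1 hr0
  rw [abs_le]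
  constructor <;> linarith

lemma tsum_eq_tsum_succ_of_eq_zero {M : Type*} [AddCommMonoid M] [TopologicalSpace M]
    {f : ℕ → M} (hf : f 0 = 0) : ∑' k, f k = ∑' k, f (k + 1) :=
  (tsum_pnat_eq_tsum_of_eq_zero hf).symm.trans tsum_pnat_eq_tsum_succ

lemma qnum_natCast_nonneg {q : ℝ} (hq0 : 0 ≤ q) (hq1 : q < 1) (n : ℕ) : 0 ≤ qnum q n := by
  rw [qnum, rpow_natCast]
  exact div_nonneg (sub_nonneg.mpr (pow_le_one₀ hq0 hq1.le)) (by linarith)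

/-- `Dop μ q n f x = (∑' k, dunklWeight μ q b k * f (node μ q n k)) / Eexp μ q b`
with `b = [n]_q x`. -/
noncomputable def dunklWeight (μ q b : ℝ) (k : ℕ) : ℝ :=
  b ^ k / gam μ q k * q ^ (k * (k - 1) / 2)

noncomputable def nodeGap (μ q : ℝ) (n k : ℕ) : ℝ :=
  (q ^ (2 * μ * theta k + 1) - q ^ (2 * μ * theta (k + 1) + 2)) / (1 - q ^ n)

section

variable {μ q : ℝ}

lemma gam_succ (k : ℕ) :
    gam μ q (k + 1) = qnum q (2 * μ * theta (k + 1) + (k + 1 : ℝ)) * gam μ q k := rfl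

lemma one_le_qnum_gam_succ (hμ : 0 ≤ μ) (hq0 : 0 < q) (hq1 : q < 1) (k : ℕ) :
    1 ≤ qnum q (2 * μ * theta (k + 1) + (k + 1 : ℝ)) := by
  refine one_le_qnum hq0 hq1 ?_
  have := theta_nonneg (k + 1)
  have : (0 : ℝ) ≤ k := k.cast_nonneg
  nlinarith

lemma one_le_gam (hμ : 0 ≤ μ) (hq0 : 0 < q) (hq1 : q < 1) (k : ℕ) : 1 ≤ gam μ q k := by
  induction k with
  | zero => simp [gam]
  | succ k ih =>
    rw [gam_succ]
    exact one_le_mul_of_one_le_of_one_le (one_le_qnum_gam_succ hμ hq0 hq1 k) ih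

lemma gam_pos (hμ : 0 ≤ μ) (hq0 : 0 < q) (hq1 : q < 1) (k : ℕ) : 0 < gam μ q k :=
  one_pos.trans_le (one_le_gam hμ hq0 hq1 k)

lemma gam_le_gam_succ (hμ : 0 ≤ μ) (hq0 : 0 < q) (hq1 : q < 1) (k : ℕ) :
    gam μ q k ≤ gam μ q (k + 1) :=
  le_mul_of_one_le_left (gam_pos hμ hq0 hq1 k).le (one_le_qnum_gam_succ hμ hq0 hq1 k)

variable {b : ℝ}

lemma dunklWeight_nonneg (hμ : 0 ≤ μ) (hq0 : 0 < q) (hq1 : q < 1) (hb : 0 ≤ b) (k : ℕ) :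
    0 ≤ dunklWeight μ q b k := by
  have := gam_pos hμ hq0 hq1 k
  unfold dunklWeight
  positivity

lemma dunklWeight_zero : dunklWeight μ q b 0 = 1 := by simp [dunklWeight, gam]

lemma dunklWeight_succ_le (hμ : 0 ≤ μ) (hq0 : 0 < q) (hq1 : q < 1) (hb : 0 ≤ b) (k : ℕ) :
    dunklWeight μ q b (k + 1) ≤ b * q ^ k * dunklWeight μ q b k := by
  have := gam_pos hμ hq0 hq1 k
  have := gam_le_gam_succ hμ hq0 hq1 k
  calc dunklWeight μ q b (k + 1)
      ≤ b ^ (k + 1) / gam μ q k * q ^ ((k + 1) * (k + 1 - 1) / 2) := by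
        unfold dunklWeight; gcongr
    _ = b * q ^ k * dunklWeight μ q b k := by
        rw [Nat.triangle_succ, dunklWeight]; ring

lemma summable_dunklWeight (hμ : 0 ≤ μ) (hq0 : 0 < q) (hq1 : q < 1) (hb : 0 ≤ b) :
    Summable (dunklWeight μ q b) := by
  have hlim : Tendsto (fun k : ℕ => b * q ^ k) atTop (𝓝 0) := by
    simpa using (tendsto_pow_atTop_nhds_zero_of_lt_one hq0.le hq1).const_mul b
  refine summable_of_ratio_norm_eventually_le (r := 1 / 2) (by norm_num) ?_
  filter_upwards [hlim.eventually_le_const (by norm_num : (0 : ℝ) < 1 / 2)] with k hk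
  have hw := dunklWeight_nonneg hμ hq0 hq1 hb
  rw [norm_of_nonneg (hw _), norm_of_nonneg (hw _)]
  exact (dunklWeight_succ_le hμ hq0 hq1 hb k).trans (mul_le_mul_of_nonneg_right hk (hw k))

lemma Eexp_eq_tsum_dunklWeight : Eexp μ q b = ∑' k, dunklWeight μ q b k :=
  tsum_congr fun k => by rw [dunklWeight]; ring

lemma one_le_Eexp (hμ : 0 ≤ μ) (hq0 : 0 < q) (hq1 : q < 1) (hb : 0 ≤ b) :
    1 ≤ Eexp μ q b := by
  rw [Eexp_eq_tsum_dunklWeight, ← dunklWeight_zero (μ := μ) (q := q) (b := b)]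
  exact (summable_dunklWeight hμ hq0 hq1 hb).le_tsum 0 fun k _ =>
    dunklWeight_nonneg hμ hq0 hq1 hb k

end

section

variable {μ q : ℝ} {n : ℕ}

lemma node_zero : node μ q n 0 = 0 := by simp [node, theta]

lemma node_succ (hq0 : 0 < q) (k : ℕ) :
    node μ q n (k + 1) = node μ q n k / q + nodeGap μ q n k := by
  have hpow (e : ℝ) : q ^ (e + ((k : ℝ) - 1)) = q ^ e * q ^ ((k : ℝ) - 1) := rpow_add hq0 _ _
  have h1 : q ^ ((k : ℝ) - 2) = q ^ ((k : ℝ) - 1) / q := by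
    rw [show (k : ℝ) - 2 = (k - 1) - 1 by ring, rpow_sub hq0, rpow_one]
  have h2 : q ^ (2 * μ * theta k + (k : ℝ)) =
      q ^ (2 * μ * theta k + 1) * q ^ ((k : ℝ) - 1) := by
    rw [← hpow]; ring_nf
  have h3 : q ^ (2 * μ * theta (k + 1) + ((k + 1 : ℕ) : ℝ)) =
      q ^ (2 * μ * theta (k + 1) + 2) * q ^ ((k : ℝ) - 1) := by
    rw [← hpow]; push_cast; ring_nf
  have h4 : q ^ (((k + 1 : ℕ) : ℝ) - 2) = q ^ ((k : ℝ) - 1) := by push_cast; ring_nf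
  rw [node, node, nodeGap, h1, h2, h3, h4]
  rcases eq_or_ne (1 - q ^ n) 0 with hD | hD
  · simp [hD]
  · field_simp
    ring

lemma abs_nodeGap_le (hμ : 0 ≤ μ) (hq0 : 0 < q) (hq1 : q ≤ 1) (k : ℕ) :
    |nodeGap μ q n k| ≤ (1 - q ^ (2 * μ + 2)) / (1 - q ^ n) := by
  have hθ (j : ℕ) : 0 ≤ 2 * μ * theta j ∧ 2 * μ * theta j ≤ 2 * μ := by
    have := theta_nonneg j
    have := theta_le_one j
    constructor <;> nlinarith
  have hnum := abs_rpow_sub_rpow_le hq0 hq1 (c := 2 * μ + 2)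
    (s := 2 * μ * theta k + 1) (r := 2 * μ * theta (k + 1) + 2)
    (by linarith [hθ k]) (by linarith [hθ k]) (by linarith [hθ (k + 1)])
    (by linarith [hθ (k + 1)])
  have hD : 0 ≤ 1 - q ^ n := sub_nonneg.mpr (pow_le_one₀ hq0.le hq1)
  rw [nodeGap, abs_div, abs_of_nonneg hD]
  exact div_le_div_of_nonneg_right hnum hD

lemma dunklWeight_succ_mul_node_succ (hμ : 0 ≤ μ) (hq0 : 0 < q) (hq1 : q < 1) (hn : n ≠ 0)
    (x : ℝ) (k : ℕ) :
    dunklWeight μ q (qnum q n * x) (k + 1) * node μ q n (k + 1) =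
      x * q * dunklWeight μ q (qnum q n * x) k := by
  have hq : 1 - q ≠ 0 := by linarith
  have hD : 1 - q ^ n ≠ 0 := (sub_pos.mpr (pow_lt_one₀ hq0.le hq1 hn)).ne'
  have hg := (gam_pos hμ hq0 hq1 k).ne'
  have hg' := (gam_pos hμ hq0 hq1 (k + 1)).ne'
  have hnode : node μ q n (k + 1) =
      (1 - q) * gam μ q (k + 1) / gam μ q k / (q ^ k / q * (1 - q ^ n)) := by
    rw [node, gam_succ, qnum, show ((k + 1 : ℕ) : ℝ) - 2 = k - 1 by push_cast; ring,
      rpow_sub hq0, rpow_natCast, rpow_one]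
    push_cast
    field_simp
  have hbx : qnum q n * x * (1 - q) = (1 - q ^ n) * x := by
    rw [qnum, rpow_natCast]; field_simp
  rw [hnode, dunklWeight, dunklWeight, Nat.triangle_succ, pow_succ, pow_add]
  field_simp
  linear_combination (qnum q n * x) ^ k * hbx

end

section

variable {μ q b x : ℝ} {n : ℕ}

lemma norm_dunklWeight_mul_nodeGap_le (hμ : 0 ≤ μ) (hq0 : 0 < q) (hq1 : q < 1) (hb : 0 ≤ b)
    (k : ℕ) :
    ‖dunklWeight μ q b k * nodeGap μ q n k‖ ≤
      (1 - q ^ (2 * μ + 2)) / (1 - q ^ n) * dunklWeight μ q b k := by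
  have hw := dunklWeight_nonneg hμ hq0 hq1 hb k
  rw [norm_mul, norm_of_nonneg hw, mul_comm]
  exact mul_le_mul_of_nonneg_right (abs_nodeGap_le hμ hq0 hq1.le k) hw

lemma summable_dunklWeight_mul_nodeGap (hμ : 0 ≤ μ) (hq0 : 0 < q) (hq1 : q < 1) (hb : 0 ≤ b) :
    Summable fun k => dunklWeight μ q b k * nodeGap μ q n k :=
  ((summable_dunklWeight hμ hq0 hq1 hb).mul_left _).of_norm_bounded
    (norm_dunklWeight_mul_nodeGap_le hμ hq0 hq1 hb)

lemma summable_dunklWeight_mul_node (hμ : 0 ≤ μ) (hq0 : 0 < q) (hq1 : q < 1) (hn : n ≠ 0)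
    (hx : 0 ≤ x) :
    Summable fun k => dunklWeight μ q (qnum q n * x) k * node μ q n k := by
  have hb : 0 ≤ qnum q n * x := mul_nonneg (qnum_natCast_nonneg hq0.le hq1 n) hx
  refine (summable_nat_add_iff 1).mp
    (((summable_dunklWeight hμ hq0 hq1 hb).mul_left (x * q)).congr fun k => ?_)
  exact (dunklWeight_succ_mul_node_succ hμ hq0 hq1 hn x k).symm

lemma tsum_dunklWeight_mul_node (hμ : 0 ≤ μ) (hq0 : 0 < q) (hq1 : q < 1) (hn : n ≠ 0) :
    ∑' k, dunklWeight μ q (qnum q n * x) k * node μ q n k =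
      x * q * ∑' k, dunklWeight μ q (qnum q n * x) k := by
  rw [tsum_eq_tsum_succ_of_eq_zero (by rw [node_zero, mul_zero]), ← tsum_mul_left]
  exact tsum_congr (dunklWeight_succ_mul_node_succ hμ hq0 hq1 hn x)

lemma tsum_dunklWeight_mul_node_sq (hμ : 0 ≤ μ) (hq0 : 0 < q) (hq1 : q < 1) (hn : n ≠ 0)
    (hx : 0 ≤ x) :
    ∑' k, dunklWeight μ q (qnum q n * x) k * node μ q n k ^ 2 =
      x ^ 2 * q * ∑' k, dunklWeight μ q (qnum q n * x) k +
        x * q * ∑' k, dunklWeight μ q (qnum q n * x) k * nodeGap μ q n k := by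
  have hb : 0 ≤ qnum q n * x := mul_nonneg (qnum_natCast_nonneg hq0.le hq1 n) hx
  calc ∑' k, dunklWeight μ q (qnum q n * x) k * node μ q n k ^ 2
      = x * q * ∑' k, dunklWeight μ q (qnum q n * x) k * node μ q n (k + 1) := by
        rw [tsum_eq_tsum_succ_of_eq_zero (by rw [node_zero]; ring), ← tsum_mul_left]
        refine tsum_congr fun k => ?_
        rw [sq, ← mul_assoc, dunklWeight_succ_mul_node_succ hμ hq0 hq1 hn x k]
        ring
    _ = x * q * ∑' k, (dunklWeight μ q (qnum q n * x) k * node μ q n k / q +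
          dunklWeight μ q (qnum q n * x) k * nodeGap μ q n k) := by
        simp only [node_succ hq0, mul_add, mul_div_assoc]
    _ = x ^ 2 * q * ∑' k, dunklWeight μ q (qnum q n * x) k +
          x * q * ∑' k, dunklWeight μ q (qnum q n * x) k * nodeGap μ q n k := by
        rw [((summable_dunklWeight_mul_node hμ hq0 hq1 hn hx).div_const q).tsum_add
          (summable_dunklWeight_mul_nodeGap hμ hq0 hq1 hb), tsum_div_const,
          tsum_dunklWeight_mul_node hμ hq0 hq1 hn, mul_div_right_comm,
          mul_div_cancel_right₀ _ hq0.ne']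
        ring

lemma Dop_sq_sub_eq (hμ : 0 ≤ μ) (hq0 : 0 < q) (hq1 : q < 1) (hn : n ≠ 0) (hx : 0 ≤ x) :
    Dop μ q n (fun t => t ^ 2) x - q * x ^ 2 =
      x * q * (∑' k, dunklWeight μ q (qnum q n * x) k * nodeGap μ q n k) /
        Eexp μ q (qnum q n * x) := by
  have hb : 0 ≤ qnum q n * x := mul_nonneg (qnum_natCast_nonneg hq0.le hq1 n) hx
  have hE := (one_pos.trans_le (one_le_Eexp hμ hq0 hq1 hb)).ne'
  change 1 / Eexp μ q (qnum q n * x) *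
    ∑' k, dunklWeight μ q (qnum q n * x) k * node μ q n k ^ 2 - q * x ^ 2 = _
  rw [tsum_dunklWeight_mul_node_sq hμ hq0 hq1 hn hx, ← Eexp_eq_tsum_dunklWeight]
  field_simp
  ring

lemma abs_Dop_sq_sub_le (hμ : 0 ≤ μ) (hq0 : 0 < q) (hq1 : q < 1) (hn : n ≠ 0) (hx : 0 ≤ x) :
    |Dop μ q n (fun t => t ^ 2) x - q * x ^ 2| ≤
      x * q * ((1 - q ^ (2 * μ + 2)) / (1 - q ^ n)) := by
  have hb : 0 ≤ qnum q n * x := mul_nonneg (qnum_natCast_nonneg hq0.le hq1 n) hx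
  have hE := one_pos.trans_le (one_le_Eexp hμ hq0 hq1 hb)
  have hgap := tsum_of_norm_bounded
    ((summable_dunklWeight hμ hq0 hq1 hb).hasSum.mul_left ((1 - q ^ (2 * μ + 2)) / (1 - q ^ n)))
    (norm_dunklWeight_mul_nodeGap_le (n := n) hμ hq0 hq1 hb)
  rw [← Eexp_eq_tsum_dunklWeight, norm_eq_abs] at hgap
  rw [Dop_sq_sub_eq hμ hq0 hq1 hn hx, abs_div, abs_mul, abs_mul, abs_of_nonneg hx,
    abs_of_pos hq0, abs_of_pos hE, div_le_iff₀ hE, mul_assoc (x * q)]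
  exact mul_le_mul_of_nonneg_left hgap (by positivity)

end

theorem Dop_e2_tendsto_general (μ : ℝ) (hμ : 0 < μ) (qs : ℕ → ℝ)
    (hq : ∀ n, 0 < qs n ∧ qs n < 1)
    (hq1 : Tendsto qs atTop (𝓝 1)) (a : ℝ) (ha1 : a < 1)
    (hqa : Tendsto (fun n => qs n ^ n) atTop (𝓝 a))
    (x : ℝ) (hx : 0 ≤ x) :
    Tendsto (fun n => Dop μ (qs n) n (fun t => t ^ 2) x) atTop (𝓝 (x ^ 2)) := by
  have hgap : Tendsto (fun n => (1 - qs n ^ (2 * μ + 2)) / (1 - qs n ^ n)) atTop (𝓝 0) := by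
    have hnum : Tendsto (fun n => 1 - qs n ^ (2 * μ + 2)) atTop (𝓝 (1 - 1 ^ (2 * μ + 2))) :=
      tendsto_const_nhds.sub (hq1.rpow_const (Or.inl one_ne_zero))
    have hquot := hnum.div (tendsto_const_nhds.sub hqa) (sub_ne_zero.mpr ha1.ne')
    rwa [one_rpow, sub_self, zero_div] at hquot
  have hbound : Tendsto (fun n => x * qs n * ((1 - qs n ^ (2 * μ + 2)) / (1 - qs n ^ n)))
      atTop (𝓝 0) := by
    simpa using (tendsto_const_nhds.mul hq1).mul hgap
  have hdiff : Tendsto (fun n => Dop μ (qs n) n (fun t => t ^ 2) x - qs n * x ^ 2)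
      atTop (𝓝 0) := by
    refine squeeze_zero_norm' ?_ hbound
    filter_upwards [eventually_ne_atTop 0] with n hn
    exact abs_Dop_sq_sub_le hμ.le (hq n).1 (hq n).2 hn hx
  have hsum := hdiff.add (hq1.mul_const (x ^ 2))
  rw [zero_add, one_mul] at hsum
  exact hsum.congr fun n => sub_add_cancel _ _

theorem Dop_e2_tendsto (μ : ℝ) (hμ : 0 < μ) (qs : ℕ → ℝ)
    (hq : ∀ n, 0 < qs n ∧ qs n < 1)
    (hq1 : Tendsto qs atTop (𝓝 1)) (a : ℝ) (ha0 : 0 ≤ a) (ha1 : a < 1)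
    (hqa : Tendsto (fun n => qs n ^ n) atTop (𝓝 a))
    (x : ℝ) (hx : 0 ≤ x) :
    Tendsto (fun n => Dop μ (qs n) n (fun t => t ^ 2) x) atTop (𝓝 (x ^ 2)) :=
  Dop_e2_tendsto_general μ hμ qs hq hq1 a ha1 hqa x hx
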